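/- The Lyapunov function W(x,y) = V(I(x,y)) of the Bernoulli-lemniscate system is proper: W(x,y) → +∞ as ‖(x,y)‖ → ∞, i.e. for every R > 0 there exists r > 0 such that W(x,y) ≥ R whenever x² + y² ≥ r². -/

import Mathlib

/-- `I(x,y) = (x²+y²)² − 4(x²−y²)`. -/
noncomputable def lemI (x y : ℝ) : ℝ := (x ^ 2 + y ^ 2) ^ 2 - 4 * (x ^ 2 - y ^ 2)

/-- `V(s) = s²/(2(1+s²)^{3/4})`. -/
noncomputable def lemV (s : ℝ) : ℝ := s ^ 2 / (2 * (1 + s ^ 2) ^ ((3 : ℝ) / 4))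

/-- The Lyapunov function `W(x,y) = V(I(x,y))`. -/
noncomputable def lemW (x y : ℝ) : ℝ := lemV (lemI x y)

/-! Since `V(s) ≈ √s / 2` for large `s` and `I ≥ ρ(ρ - 4)` with `ρ = x² + y²`, the function `W`
grows at least linearly in `ρ`; the explicit bound `V(s) ≥ √s / 4` for `s ≥ 1` makes this effective. -/

lemma sq_add_sq_mul_sub_four_le_lemI (x y : ℝ) :
    (x ^ 2 + y ^ 2) * (x ^ 2 + y ^ 2 - 4) ≤ lemI x y := by
  unfold lemI
  nlinarith [sq_nonneg y]

lemma le_lemI_of_add_four_le {s x y : ℝ} (hs : 0 ≤ s) (h : s + 4 ≤ x ^ 2 + y ^ 2) :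
    s ≤ lemI x y :=
  calc s ≤ (s + 4) * s := by nlinarith
    _ ≤ (x ^ 2 + y ^ 2) * (x ^ 2 + y ^ 2 - 4) := by gcongr; linarith
    _ ≤ lemI x y := sq_add_sq_mul_sub_four_le_lemI x y

lemma one_add_pow_four_rpow_le {t : ℝ} (ht : 1 ≤ t) :
    (1 + t ^ 4) ^ ((3 : ℝ) / 4) ≤ 2 * t ^ 3 :=
  calc (1 + t ^ 4) ^ ((3 : ℝ) / 4) ≤ (2 * t ^ 4) ^ ((3 : ℝ) / 4) := by
        gcongr
        nlinarith [one_le_pow₀ (n := 4) ht]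
    _ = 2 ^ ((3 : ℝ) / 4) * t ^ 3 := by
        rw [Real.mul_rpow (by norm_num) (by positivity), ← Real.rpow_natCast_mul (by linarith)]
        norm_num
    _ ≤ 2 * t ^ 3 := by
        gcongr
        calc (2 : ℝ) ^ ((3 : ℝ) / 4) ≤ 2 ^ (1 : ℝ) :=
              Real.rpow_le_rpow_of_exponent_le (by norm_num) (by norm_num)
          _ = 2 := Real.rpow_one 2

lemma sqrt_div_four_le_lemV {s : ℝ} (hs : 1 ≤ s) : √s / 4 ≤ lemV s := by
  have ht : 1 ≤ √s := Real.one_le_sqrt.mpr hs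
  have hs2 : s ^ 2 = √s ^ 4 := by
    rw [show (4 : ℕ) = 2 * 2 from rfl, pow_mul, Real.sq_sqrt (by linarith)]
  calc √s / 4 = √s ^ 4 / (2 * (2 * √s ^ 3)) := by
        field_simp
        ring
    _ ≤ lemV s := by
        rw [lemV, hs2]
        gcongr
        exact one_add_pow_four_rpow_le ht

/-- The Lyapunov function `W = V ∘ I` of the Bernoulli-lemniscate system is proper:
`W(x,y) → +∞` as `‖(x,y)‖ → ∞`, i.e. for every `R > 0` there is `r > 0` with
`W(x,y) ≥ R` whenever `x² + y² ≥ r²`. -/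
theorem lemniscate_lyapunov_proper :
    ∀ R : ℝ, 0 < R → ∃ r : ℝ, 0 < r ∧ ∀ x y : ℝ, r ^ 2 ≤ x ^ 2 + y ^ 2 → R ≤ lemW x y := by
  intro R hR
  set s : ℝ := (4 * R) ^ 2 + 1
  have hs : 1 ≤ s := le_add_of_nonneg_left (sq_nonneg _)
  refine ⟨√(s + 4), by positivity, fun x y hxy => ?_⟩
  rw [Real.sq_sqrt (by positivity)] at hxy
  have hI : s ≤ lemI x y := le_lemI_of_add_four_le (by linarith) hxy
  calc R = √((4 * R) ^ 2) / 4 := by rw [Real.sqrt_sq (by positivity)]; ring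
    _ ≤ √(lemI x y) / 4 := by gcongr; linarith
    _ ≤ lemW x y := sqrt_div_four_le_lemV (by linarith)
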